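/- arXiv:2504.11815 — 2 statements merged into one kernel-verified Lean document; each statement's English description precedes it below -/
import Mathlib

section
/- Let C ⊆ ℍⁿ_κ be a closed κ-hyperbolically convex set, p ∈ ℍⁿ_κ and u ∈ K_C \ {0} where K_C is the cone spanned by C. If (2 p_{n+1} e^{n+1} − u)ᵀ(q − u/√(−κ⟨u,u⟩)) ≥ 0 for all q ∈ C, and u is a Euclidean orthogonal projection of p onto K_C, then P_C(p) = u/√(−κ⟨u,u⟩). -/
noncomputable section

/-- Lorentzian inner product on ℝ^{n+1}. -/
def lip {n : ℕ} (x y : Fin (n+1) → ℝ) : ℝ :=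
  (∑ i : Fin n, x i.castSucc * y i.castSucc) - x (Fin.last n) * y (Fin.last n)

/-- Lorentzian norm (of vectors with nonnegative self-product). -/
def lnorm {n : ℕ} (x : Fin (n+1) → ℝ) : ℝ := Real.sqrt (lip x x)

/-- Euclidean dot product. -/
def edot {n : ℕ} (x y : Fin (n+1) → ℝ) : ℝ := ∑ i, x i * y i

/-- The matrix J = diag(1,…,1,−1) as a map. -/
def Jm {n : ℕ} (x : Fin (n+1) → ℝ) : Fin (n+1) → ℝ :=
  fun i => if i = Fin.last n then -(x i) else x i

/-- The κ-hyperbolic space form (hyperboloid model). -/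
def Hyp {n : ℕ} (κ : ℝ) : Set (Fin (n+1) → ℝ) :=
  {p | lip p p = -1/κ ∧ 0 < p (Fin.last n)}

/-- Inverse hyperbolic cosine. -/
def arcosh (x : ℝ) : ℝ := Real.log (x + Real.sqrt (x^2 - 1))

/-- Intrinsic distance on the κ-hyperbolic space form. -/
def dH {n : ℕ} (κ : ℝ) (p q : Fin (n+1) → ℝ) : ℝ :=
  (1 / Real.sqrt κ) * arcosh (-(κ * lip p q))

/-- Lorentzian projection onto the tangent space at p. -/
def projT {n : ℕ} (κ : ℝ) (p x : Fin (n+1) → ℝ) : Fin (n+1) → ℝ :=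
  x + (κ * lip p x) • p

/-- Logarithm map of the κ-hyperbolic space form. -/
def logH {n : ℕ} (κ : ℝ) (p q : Fin (n+1) → ℝ) : Fin (n+1) → ℝ :=
  (dH κ p q / lnorm (projT κ p q)) • projT κ p q

/-- Exponential map of the κ-hyperbolic space form. -/
def expH {n : ℕ} (κ : ℝ) (p v : Fin (n+1) → ℝ) : Fin (n+1) → ℝ :=
  Real.cosh (Real.sqrt κ * lnorm v) • p +
    (Real.sinh (Real.sqrt κ * lnorm v) / (Real.sqrt κ * lnorm v)) • v

/-- The cone spanned by a set. -/
def coneOf {n : ℕ} (C : Set (Fin (n+1) → ℝ)) : Set (Fin (n+1) → ℝ) :=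
  {x | ∃ t : ℝ, 0 ≤ t ∧ ∃ p ∈ C, x = t • p}

/-- The Lorentz cone. -/
def LorentzCone {n : ℕ} : Set (Fin (n+1) → ℝ) :=
  {x | lip x x ≤ 0 ∧ 0 ≤ x (Fin.last n)}

/-- The interior of the Lorentz cone. -/
def LorentzConeInt {n : ℕ} : Set (Fin (n+1) → ℝ) :=
  {x | lip x x < 0 ∧ 0 < x (Fin.last n)}

/-!
Write `u = t • q₀` with `t > 0` and `q₀ ∈ C`. On the hyperboloid `√(-κ⟨u,u⟩) = t`, so the candidate
`u / √(-κ⟨u,u⟩)` is `q₀` itself. Since `⟨p, q⟩ = pᵀq - 2 p_{n+1} q_{n+1}`, the Lorentzian gap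
`⟨p, q⟩ - ⟨p, q₀⟩` splits into the Euclidean term `(p - u)ᵀq ≤ 0` (projection inequality, using
`(p - u)ᵀq₀ = 0`) minus the term `(2 p_{n+1} e^{n+1} - u)ᵀ(q - q₀) ≥ 0` of the hypothesis. Hence `q₀`
maximizes `⟨p, ·⟩` on `C` and is `P_C(p)` by uniqueness of the maximizer.
-/

lemma edot_eq_dotProduct {n : ℕ} (x y : Fin (n+1) → ℝ) : edot x y = x ⬝ᵥ y := rfl

lemma lip_eq_dotProduct_sub {n : ℕ} (x y : Fin (n+1) → ℝ) :
    lip x y = x ⬝ᵥ y - 2 * x (Fin.last n) * y (Fin.last n) := by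
  simp only [lip, dotProduct, Fin.sum_univ_castSucc]
  ring

lemma lip_smul_left {n : ℕ} (t : ℝ) (x y : Fin (n+1) → ℝ) :
    lip (t • x) y = t * lip x y := by
  simp only [lip_eq_dotProduct_sub, smul_dotProduct, Pi.smul_apply, smul_eq_mul]
  ring

lemma lip_smul_right {n : ℕ} (t : ℝ) (x y : Fin (n+1) → ℝ) :
    lip x (t • y) = t * lip x y := by
  simp only [lip_eq_dotProduct_sub, dotProduct_smul, Pi.smul_apply, smul_eq_mul]
  ring

lemma self_mem_coneOf {n : ℕ} {C : Set (Fin (n+1) → ℝ)} {q : Fin (n+1) → ℝ} (hq : q ∈ C) :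
    q ∈ coneOf C :=
  ⟨1, zero_le_one, q, hq, (one_smul ℝ q).symm⟩

lemma sqrt_neg_mul_lip_smul_self {n : ℕ} {κ t : ℝ} (hκ : κ ≠ 0) (ht : 0 ≤ t)
    {q : Fin (n+1) → ℝ} (hq : lip q q = -1/κ) :
    Real.sqrt (-(κ * lip (t • q) (t • q))) = t := by
  have h : -(κ * lip (t • q) (t • q)) = t ^ 2 := by
    rw [lip_smul_left, lip_smul_right, hq]
    field_simp
  rw [h, Real.sqrt_sq ht]

lemma normalize_smul_of_mem_Hyp {n : ℕ} {κ t : ℝ} (hκ : 0 < κ) (ht : 0 < t)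
    {q : Fin (n+1) → ℝ} (hq : q ∈ Hyp κ) :
    (Real.sqrt (-(κ * lip (t • q) (t • q))))⁻¹ • (t • q) = q := by
  rw [sqrt_neg_mul_lip_smul_self hκ.ne' ht.le hq.1, smul_smul, inv_mul_cancel₀ ht.ne', one_smul]

lemma lip_le_lip_of_euclidean_proj {n : ℕ} {p u q₀ q : Fin (n+1) → ℝ}
    (hq : (p - u) ⬝ᵥ q ≤ 0) (hq₀ : (p - u) ⬝ᵥ q₀ = 0)
    (hvar : 0 ≤ ((2 * p (Fin.last n)) • Pi.single (Fin.last n) 1 - u) ⬝ᵥ (q - q₀)) :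
    lip p q ≤ lip p q₀ := by
  simp only [sub_dotProduct, dotProduct_sub, smul_dotProduct, single_one_dotProduct,
    smul_eq_mul] at hq hq₀ hvar
  rw [lip_eq_dotProduct_sub, lip_eq_dotProduct_sub]
  linarith

theorem intrinsic_projection_from_euclidean_projection_general {n : ℕ} (κ : ℝ) (hκ : 0 < κ)
    (C : Set (Fin (n+1) → ℝ)) (hC : C ⊆ Hyp κ)
    (p u : Fin (n+1) → ℝ) (hu : u ∈ coneOf C) (hu0 : u ≠ 0)
    (hcond : ∀ q ∈ C, 0 ≤ edot ((2 * p (Fin.last n)) • (Pi.single (Fin.last n) 1 : Fin (n+1) → ℝ) - u)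
      (q - (Real.sqrt (-(κ * lip u u)))⁻¹ • u))
    (hproj1 : ∀ z ∈ coneOf C, edot (p - u) z ≤ 0)
    (hproj2 : edot (p - u) u = 0)
    (Pc : Fin (n+1) → ℝ)
    (hPuniq : ∀ y ∈ C, (∀ q ∈ C, lip p q ≤ lip p y) → y = Pc) :
    Pc = (Real.sqrt (-(κ * lip u u)))⁻¹ • u := by
  obtain ⟨t, ht, q₀, hq₀, rfl⟩ := hu
  have ht0 : 0 < t := ht.lt_of_ne (by rintro rfl; exact hu0 (zero_smul ℝ q₀))
  rw [normalize_smul_of_mem_Hyp hκ ht0 (hC hq₀)] at hcond ⊢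
  simp only [edot_eq_dotProduct] at hcond hproj1 hproj2
  have horth : (p - t • q₀) ⬝ᵥ q₀ = 0 := by
    rw [dotProduct_smul, smul_eq_mul] at hproj2
    exact (mul_eq_zero.mp hproj2).resolve_left ht0.ne'
  refine (hPuniq q₀ hq₀ fun q hq => ?_).symm
  exact lip_le_lip_of_euclidean_proj (hproj1 q (self_mem_coneOf hq)) horth (hcond q hq)

/-- If u ∈ K_C \ {0} satisfies (2p_{n+1}e^{n+1} − u)ᵀ(q − u/√(−κ⟨u,u⟩)) ≥ 0 for all q ∈ C
and u is a Euclidean orthogonal projection of p onto K_C, then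
P_C(p) = u/√(−κ⟨u,u⟩), where P_C(p) is the (unique) maximizer of ⟨p,·⟩ over C. -/
theorem intrinsic_projection_from_euclidean_projection {n : ℕ} (κ : ℝ) (hκ : 0 < κ)
    (C : Set (Fin (n+1) → ℝ)) (hC : C ⊆ Hyp κ) (hCc : IsClosed C)
    (hconv : Convex ℝ (coneOf C))
    (p u : Fin (n+1) → ℝ) (hp : p ∈ Hyp κ) (hu : u ∈ coneOf C) (hu0 : u ≠ 0)
    (hcond : ∀ q ∈ C, 0 ≤ edot ((2 * p (Fin.last n)) • (Pi.single (Fin.last n) 1 : Fin (n+1) → ℝ) - u)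
      (q - (Real.sqrt (-(κ * lip u u)))⁻¹ • u))
    (hproj1 : ∀ z ∈ coneOf C, edot (p - u) z ≤ 0)
    (hproj2 : edot (p - u) u = 0)
    (Pc : Fin (n+1) → ℝ) (hPmem : Pc ∈ C)
    (hPmax : ∀ q ∈ C, lip p q ≤ lip p Pc)
    (hPuniq : ∀ y ∈ C, (∀ q ∈ C, lip p q ≤ lip p y) → y = Pc) :
    Pc = (Real.sqrt (-(κ * lip u u)))⁻¹ • u :=
  intrinsic_projection_from_euclidean_projection_general κ hκ C hC p u hu hu0 hcond hproj1 hproj2 Pc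
    hPuniq
end
end

section
/- Let p ∈ int(L) and K ⊆ L a convex cone with 0 ∈ K such that K ∩ ℍⁿ_κ is closed κ-hyperbolically convex (κ := −1/⟨p,p⟩). If p ∈ K, then the set of Lorentz projections of p into K equals {0, p}. Moreover, for any λ > 0, the Lorentz projection set of λp into K equals λ times the Lorentz projection set of p into K. -/
/-!
Testing the variational inequality defining `y ∈ Λ_K(p)` at `z = 0` and `z = 2y` gives
`⟨p - y, y⟩ = 0`, and testing it at `z = p` shows that `p - y` is causal. Two causal,
Lorentz-orthogonal vectors that are both nonzero are null, so their sum `p` would be null,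
contradicting `⟨p, p⟩ < 0`; hence `y = 0` or `y = p`. Homogeneity holds because `K` is a cone
and `⟨·, ·⟩` scales quadratically.
-/

open Pointwise

noncomputable section

open Matrix

variable {n : ℕ}

lemma lip_eq_dotProduct_init (x y : Fin (n+1) → ℝ) :
    lip x y = Fin.init x ⬝ᵥ Fin.init y - x (Fin.last n) * y (Fin.last n) := rfl

lemma lip_comm (x y : Fin (n+1) → ℝ) : lip x y = lip y x := by
  simp only [lip_eq_dotProduct_init, dotProduct_comm, mul_comm]

lemma lip_zero_left (y : Fin (n+1) → ℝ) : lip 0 y = 0 := by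
  simp [lip]

lemma lip_neg_right (x y : Fin (n+1) → ℝ) : lip x (-y) = -lip x y := by
  simp only [lip, Pi.neg_apply, mul_neg, Finset.sum_neg_distrib, sub_neg_eq_add, neg_sub]
  ring

lemma lip_smul_smul (a : ℝ) (x y : Fin (n+1) → ℝ) : lip (a • x) (a • y) = a ^ 2 * lip x y := by
  simp only [lip, Pi.smul_apply, smul_eq_mul, mul_sub, Finset.mul_sum]
  congr 1
  · exact Finset.sum_congr rfl fun _ _ => by ring
  · ring

lemma lip_add_self (x y : Fin (n+1) → ℝ) :
    lip (x + y) (x + y) = lip x x + 2 * lip x y + lip y y := by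
  have hinit : Fin.init (x + y) = Fin.init x + Fin.init y := rfl
  simp only [lip_eq_dotProduct_init, hinit, add_dotProduct, dotProduct_add, Pi.add_apply,
    dotProduct_comm (Fin.init y) (Fin.init x)]
  ring

lemma dotProduct_sq_le {m : ℕ} (v w : Fin m → ℝ) : (v ⬝ᵥ w) ^ 2 ≤ (v ⬝ᵥ v) * (w ⬝ᵥ w) := by
  simpa only [dotProduct, sq] using Finset.sum_mul_sq_le_sq_mul_sq Finset.univ v w

lemma eq_zero_of_lip_self_nonpos_of_last_eq_zero {x : Fin (n+1) → ℝ} (hx : lip x x ≤ 0)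
    (hlast : x (Fin.last n) = 0) : x = 0 := by
  rw [lip_eq_dotProduct_init, hlast, mul_zero, sub_zero] at hx
  have hinit : Fin.init x = 0 :=
    dotProduct_self_eq_zero.1 (le_antisymm hx (Finset.sum_nonneg fun _ _ => mul_self_nonneg _))
  funext i
  rcases Fin.eq_castSucc_or_eq_last i with ⟨j, rfl⟩ | rfl
  · exact congrFun hinit j
  · exact hlast

lemma lip_self_eq_zero_of_lip_eq_zero {x y : Fin (n+1) → ℝ} (hx : lip x x ≤ 0)
    (hy : lip y y ≤ 0) (hxy : lip x y = 0) (hy0 : y ≠ 0) : lip x x = 0 := by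
  have hb : y (Fin.last n) ^ 2 ≠ 0 :=
    pow_ne_zero 2 fun h => hy0 (eq_zero_of_lip_self_nonpos_of_last_eq_zero hy h)
  rw [lip_eq_dotProduct_init] at hx hy hxy ⊢
  set u := Fin.init x
  set v := Fin.init y
  set a := x (Fin.last n)
  set b := y (Fin.last n)
  have huu : 0 ≤ u ⬝ᵥ u := Finset.sum_nonneg fun _ _ => mul_self_nonneg _
  have hcs : a ^ 2 * b ^ 2 ≤ (u ⬝ᵥ u) * b ^ 2 := calc
    a ^ 2 * b ^ 2 = (u ⬝ᵥ v) ^ 2 := by rw [sub_eq_zero.1 hxy]; ring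
    _ ≤ (u ⬝ᵥ u) * (v ⬝ᵥ v) := dotProduct_sq_le u v
    _ ≤ (u ⬝ᵥ u) * b ^ 2 := mul_le_mul_of_nonneg_left (by linarith) huu
  have := le_of_mul_le_mul_right hcs (lt_of_le_of_ne (sq_nonneg b) hb.symm)
  linarith

lemma eq_zero_or_eq_zero_of_lip_eq_zero {x y : Fin (n+1) → ℝ} (hx : lip x x ≤ 0)
    (hy : lip y y ≤ 0) (hxy : lip x y = 0) (hsum : lip (x + y) (x + y) < 0) :
    x = 0 ∨ y = 0 := by
  by_contra! ⟨hx0, hy0⟩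
  have hxx := lip_self_eq_zero_of_lip_eq_zero hx hy hxy hy0
  have hyy := lip_self_eq_zero_of_lip_eq_zero hy hx (lip_comm x y ▸ hxy) hx0
  rw [lip_add_self, hxx, hyy, hxy] at hsum
  norm_num at hsum

lemma lip_nonpos_of_mem_lorentzCone {x y : Fin (n+1) → ℝ} (hx : x ∈ LorentzCone)
    (hy : y ∈ LorentzCone) : lip x y ≤ 0 := by
  obtain ⟨hxx, ha⟩ := hx
  obtain ⟨hyy, hb⟩ := hy
  rw [lip_eq_dotProduct_init] at hxx hyy ⊢
  have hsq : (Fin.init x ⬝ᵥ Fin.init y) ^ 2 ≤ (x (Fin.last n) * y (Fin.last n)) ^ 2 := calc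
    _ ≤ (Fin.init x ⬝ᵥ Fin.init x) * (Fin.init y ⬝ᵥ Fin.init y) := dotProduct_sq_le _ _
    _ ≤ x (Fin.last n) ^ 2 * y (Fin.last n) ^ 2 :=
      mul_le_mul (by linarith) (by linarith) (Finset.sum_nonneg fun _ _ => mul_self_nonneg _)
        (sq_nonneg _)
    _ = _ := by ring
  linarith [(abs_le_of_sq_le_sq' hsq (mul_nonneg ha hb)).2]

def lorentzProjSet (K : Set (Fin (n+1) → ℝ)) (x : Fin (n+1) → ℝ) : Set (Fin (n+1) → ℝ) :=
  {y ∈ K | ∀ z ∈ K, lip (x - y) (z - y) ≤ 0}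

variable {K : Set (Fin (n+1) → ℝ)}

lemma lip_sub_eq_zero_of_mem_lorentzProjSet (hcone : ∀ t : ℝ, 0 < t → ∀ z ∈ K, t • z ∈ K)
    (h0 : (0 : Fin (n+1) → ℝ) ∈ K) {x y : Fin (n+1) → ℝ} (hy : y ∈ lorentzProjSet K x) :
    lip (x - y) y = 0 := by
  have hzero := hy.2 0 h0
  have htwice := hy.2 ((2 : ℝ) • y) (hcone 2 two_pos y hy.1)
  rw [zero_sub, lip_neg_right] at hzero
  rw [two_smul, add_sub_cancel_right] at htwice
  linarith

lemma smul_lorentzProjSet_subset (hcone : ∀ t : ℝ, 0 < t → ∀ z ∈ K, t • z ∈ K) {l : ℝ} (hl : 0 < l)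
    (x : Fin (n+1) → ℝ) :
    l • lorentzProjSet K x ⊆ lorentzProjSet K (l • x) := by
  rintro _ ⟨y, ⟨hyK, hy⟩, rfl⟩
  refine ⟨hcone l hl y hyK, fun z hz => ?_⟩
  have hrescale : z - l • y = l • (l⁻¹ • z - y) := by
    rw [smul_sub, smul_inv_smul₀ hl.ne']
  rw [← smul_sub, hrescale, lip_smul_smul]
  exact mul_nonpos_of_nonneg_of_nonpos (sq_nonneg l) (hy _ (hcone _ (inv_pos.2 hl) z hz))

lemma lorentzProjSet_smul (hcone : ∀ t : ℝ, 0 < t → ∀ z ∈ K, t • z ∈ K) {l : ℝ} (hl : 0 < l)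
    (x : Fin (n+1) → ℝ) :
    lorentzProjSet K (l • x) = l • lorentzProjSet K x := by
  refine Set.Subset.antisymm ?_ (smul_lorentzProjSet_subset hcone hl x)
  calc lorentzProjSet K (l • x)
      = l • l⁻¹ • lorentzProjSet K (l • x) := (smul_inv_smul₀ hl.ne' _).symm
    _ ⊆ l • lorentzProjSet K (l⁻¹ • l • x) :=
        Set.smul_set_mono (smul_lorentzProjSet_subset hcone (inv_pos.2 hl) _)
    _ = l • lorentzProjSet K x := by rw [inv_smul_smul₀ hl.ne']

lemma lorentzProjSet_self (hcone : ∀ t : ℝ, 0 < t → ∀ z ∈ K, t • z ∈ K)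
    (hK : K ⊆ LorentzCone) (h0 : (0 : Fin (n+1) → ℝ) ∈ K)
    {p : Fin (n+1) → ℝ} (hp : p ∈ LorentzConeInt) (hpK : p ∈ K) :
    lorentzProjSet K p = {0, p} := by
  ext y
  constructor
  · intro hy
    have horth := lip_sub_eq_zero_of_mem_lorentzProjSet hcone h0 hy
    have hcausal : lip (p - y) (p - y) ≤ 0 := by simpa using hy.2 p hpK
    have hsum : lip (p - y + y) (p - y + y) < 0 := by simpa using hp.1
    rcases eq_zero_or_eq_zero_of_lip_eq_zero hcausal (hK hy.1).1 horth hsum with h | h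
    · exact Or.inr (sub_eq_zero.1 h).symm
    · exact Or.inl h
  · rintro (rfl | rfl)
    · refine ⟨h0, fun z hz => ?_⟩
      simpa using lip_nonpos_of_mem_lorentzCone ⟨hp.1.le, hp.2.le⟩ (hK hz)
    · exact ⟨hpK, fun z _ => by rw [sub_self, lip_zero_left]⟩

theorem lorentz_projection_of_mem_and_homogeneous_general {n : ℕ}
    (p : Fin (n+1) → ℝ) (hp : p ∈ LorentzConeInt)
    (K : Set (Fin (n+1) → ℝ)) (hK : K ⊆ LorentzCone)
    (hcone : ∀ t : ℝ, 0 < t → ∀ z ∈ K, t • z ∈ K)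
    (h0 : (0 : Fin (n+1) → ℝ) ∈ K)
    (hpK : p ∈ K) :
    ({y ∈ K | ∀ z ∈ K, lip (p - y) (z - y) ≤ 0} = {0, p}) ∧
    (∀ l : ℝ, 0 < l →
      {y ∈ K | ∀ z ∈ K, lip (l • p - y) (z - y) ≤ 0} =
        l • {y ∈ K | ∀ z ∈ K, lip (p - y) (z - y) ≤ 0}) :=
  ⟨lorentzProjSet_self hcone hK h0 hp hpK, fun _ hl => lorentzProjSet_smul hcone hl p⟩

/-- If p ∈ K, then the Lorentz projection set of p into K is {0, p}; moreover the
Lorentz projection set is positively homogeneous: Λ_K(λp) = λΛ_K(p) for λ > 0. -/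
theorem lorentz_projection_of_mem_and_homogeneous {n : ℕ}
    (p : Fin (n+1) → ℝ) (hp : p ∈ LorentzConeInt)
    (K : Set (Fin (n+1) → ℝ)) (hK : K ⊆ LorentzCone)
    (hconv : Convex ℝ K) (hcone : ∀ t : ℝ, 0 < t → ∀ z ∈ K, t • z ∈ K)
    (h0 : (0 : Fin (n+1) → ℝ) ∈ K)
    (hCc : IsClosed (K ∩ Hyp (-1 / lip p p)))
    (hpK : p ∈ K) :
    ({y ∈ K | ∀ z ∈ K, lip (p - y) (z - y) ≤ 0} = {0, p}) ∧
    (∀ l : ℝ, 0 < l →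
      {y ∈ K | ∀ z ∈ K, lip (l • p - y) (z - y) ≤ 0} =
        l • {y ∈ K | ∀ z ∈ K, lip (p - y) (z - y) ≤ 0}) :=
  lorentz_projection_of_mem_and_homogeneous_general p hp K hK hcone h0 hpK
end
end
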